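/- Let P_{XY} be a joint pmf on finite alphabets 𝒳×𝒴 with P_X(x)>0 for every x∈𝒳. Let g:[0,1]→[0,∞) satisfy: g(0)=0, g is continuous at 0, and 0 < sup_{p∈[0,1]} g(p) < ∞. Then the maximal realizable g-leakage satisfies sup over finite alphabets 𝒰 and channels P_{U|X} of log max_{y:P_Y(y)>0} [ G_g(P_{U|Y=y}) / G_g(P_U) ] = max_{(x,y):P_{XY}(x,y)>0} log[ P_{XY}(x,y) / (P_X(x)P_Y(y)) ] = D_∞(P_{XY}‖P_X×P_Y). Here P_{U|Y=y}(u)=Σ_x P_{X|Y}(x|y)P_{U|X}(u|x) and P_U(u)=Σ_x P_X(x)P_{U|X}(u|x). -/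

import Mathlib

/-!
Converse: with `C = exp D_∞(P_{XY} ‖ P_X × P_Y)` one has `P_{X|Y=y} ≤ C · P_X` pointwise, and
pushing through a channel and then maximising the expected gain preserves this inequality, so every
gain ratio is at most `C`.

Achievability: let `(x₀, y₀)` attain `D_∞` and take the channel that emits a distinguished symbol
when `X = x₀` and is uniform on `M` other symbols otherwise. Putting any mass `t` on the
distinguished symbol shows that the numerator is at least `P_{X|Y}(x₀|y₀) · sup g`. Since `g` is
continuous at `0` with `g 0 = 0`, it has a majorant `ε + L t` on `[0, 1]`, so the noise symbols
contribute at most `ε + L / M` and the denominator is at most `P_X(x₀) · sup g + o(1)` as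
`M → ∞`. The ratios therefore approach `P_{X|Y}(x₀|y₀) / P_X(x₀) = C`.
-/

open Finset

/-- A probability mass function on a finite type. -/
def IsPMF {α : Type*} [Fintype α] (p : α → ℝ) : Prop :=
  (∀ a, 0 ≤ p a) ∧ ∑ a, p a = 1

/-- A channel (row-stochastic kernel). -/
def IsChannel {X U : Type*} [Fintype U] (K : X → U → ℝ) : Prop :=
  ∀ x, IsPMF (K x)

/-- The pmf induced on `U` by a pmf `P` on `X` and a channel `K`. -/
noncomputable def push {X U : Type*} [Fintype X] (P : X → ℝ) (K : X → U → ℝ) : U → ℝ :=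
  fun u => ∑ x, P x * K x u

/-- The maximal expected gain `G_g(R) = sup_{P̂} ∑_u R(u) g(P̂(u))`. -/
noncomputable def maxGain {U : Type*} [Fintype U] (g : ℝ → ℝ) (R : U → ℝ) : ℝ :=
  sSup {v : ℝ | ∃ Ph : U → ℝ, IsPMF Ph ∧ v = ∑ u, R u * g (Ph u)}

/-- The Rényi divergence of order `∞`: `max_{x : P(x) > 0} log (P(x)/Q(x))`. -/
noncomputable def Dinf {X : Type*} [Fintype X] (P Q : X → ℝ) : ℝ :=
  sSup {v : ℝ | ∃ x, 0 < P x ∧ v = Real.log (P x / Q x)}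

open Set Filter Topology Real

section PMF

variable {α β : Type*} [Fintype α] [Fintype β] {p : α → ℝ}

lemma IsPMF.le_one (hp : IsPMF p) (a : α) : p a ≤ 1 := by
  rw [← hp.2]
  exact single_le_sum (fun i _ => hp.1 i) (mem_univ a)

lemma IsPMF.mem_Icc (hp : IsPMF p) (a : α) : p a ∈ Icc (0 : ℝ) 1 :=
  ⟨hp.1 a, hp.le_one a⟩

lemma IsPMF.exists_pos (hp : IsPMF p) : ∃ a, 0 < p a := by
  by_contra! h
  have : ∑ a, p a ≤ 0 := sum_nonpos fun a _ => h a
  linarith [hp.2]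

lemma IsPMF.nonempty (hp : IsPMF p) : Nonempty α :=
  let ⟨a, _⟩ := hp.exists_pos
  ⟨a⟩

lemma isPMF_single [DecidableEq α] (a : α) : IsPMF (Pi.single a (1 : ℝ)) :=
  ⟨fun b => by by_cases h : b = a <;> simp [h], by simp⟩

lemma isPMF_pair [DecidableEq α] (a b : α) {t : ℝ} (ht : t ∈ Icc (0 : ℝ) 1) :
    IsPMF (Pi.single a t + Pi.single b (1 - t)) := by
  refine ⟨fun c => add_nonneg ?_ ?_, ?_⟩
  · by_cases h : c = a <;> simp [h, ht.1]
  · by_cases h : c = b <;> simp [h, ht.2]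
  · simp [sum_add_distrib]

lemma IsPMF.prod {q : β → ℝ} (hp : IsPMF p) (hq : IsPMF q) :
    IsPMF (fun z : α × β => p z.1 * q z.2) :=
  ⟨fun z => mul_nonneg (hp.1 z.1) (hq.1 z.2), by
    rw [Fintype.sum_prod_type, ← sum_mul_sum, hp.2, hq.2, one_mul]⟩

lemma isPMF_div_sum {w : α → ℝ} (hw : ∀ a, 0 ≤ w a) (h : 0 < ∑ a, w a) :
    IsPMF (fun a => w a / ∑ a', w a') :=
  ⟨fun a => div_nonneg (hw a) h.le, by rw [← sum_div, div_self h.ne']⟩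

variable {P : α → β → ℝ}

lemma IsPMF.fst_marginal (hP : IsPMF (fun z : α × β => P z.1 z.2)) :
    IsPMF (fun a => ∑ b, P a b) :=
  ⟨fun a => sum_nonneg fun b _ => hP.1 (a, b), by rw [← hP.2, Fintype.sum_prod_type]⟩

lemma IsPMF.snd_marginal (hP : IsPMF (fun z : α × β => P z.1 z.2)) :
    IsPMF (fun b => ∑ a, P a b) :=
  ⟨fun b => sum_nonneg fun a _ => hP.1 (a, b), by rw [← hP.2, Fintype.sum_prod_type_right]⟩

end PMF

section Dinf

variable {α : Type*} [Fintype α] {P Q : α → ℝ}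

lemma finite_Dinf_set : {v : ℝ | ∃ a, 0 < P a ∧ v = Real.log (P a / Q a)}.Finite :=
  (finite_range fun a => Real.log (P a / Q a)).subset <| by
    rintro _ ⟨a, _, rfl⟩
    exact ⟨a, rfl⟩

lemma le_Dinf {a : α} (ha : 0 < P a) : Real.log (P a / Q a) ≤ Dinf P Q :=
  le_csSup finite_Dinf_set.bddAbove ⟨a, ha, rfl⟩

lemma exists_eq_Dinf (h : ∃ a, 0 < P a) : ∃ a, 0 < P a ∧ Dinf P Q = Real.log (P a / Q a) :=
  let ⟨a, ha⟩ := h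
  Set.Nonempty.csSup_mem (s := {v : ℝ | ∃ a, 0 < P a ∧ v = Real.log (P a / Q a)})
    ⟨_, a, ha, rfl⟩ finite_Dinf_set

lemma le_exp_Dinf_mul {a : α} (ha : 0 < P a) (hQa : 0 < Q a) : P a ≤ exp (Dinf P Q) * Q a := by
  rw [← div_le_iff₀ hQa, ← exp_log (div_pos ha hQa)]
  exact exp_le_exp.2 (le_Dinf ha)

lemma Dinf_nonneg (hP : IsPMF P) (hQ : IsPMF Q) : 0 ≤ Dinf P Q := by
  -- two pmfs cannot satisfy `P < Q` on the whole support of `P`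
  obtain ⟨a, ha, hQa⟩ : ∃ a, 0 < P a ∧ Q a ≤ P a := by
    by_contra! h
    have hlt : ∑ a, P a < ∑ a, Q a := by
      obtain ⟨a, ha⟩ := hP.exists_pos
      refine sum_lt_sum (fun b _ => ?_) ⟨a, mem_univ a, h a ha⟩
      rcases (hP.1 b).eq_or_lt with hb | hb
      · exact hb ▸ hQ.1 b
      · exact (h b hb).le
    linarith [hP.2, hQ.2]
  refine (le_Dinf ha).trans' ?_
  rcases (hQ.1 a).eq_or_lt with h0 | h0
  · simp [← h0]
  · exact log_nonneg ((one_le_div h0).2 hQa)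

end Dinf

section maxGain

variable {U : Type*} [Fintype U] {g : ℝ → ℝ} {R S : U → ℝ}

lemma bddAbove_gains (hgb : BddAbove (g '' Icc 0 1)) (hR : ∀ u, 0 ≤ R u) :
    BddAbove {v : ℝ | ∃ Ph : U → ℝ, IsPMF Ph ∧ v = ∑ u, R u * g (Ph u)} := by
  obtain ⟨s, hs⟩ := hgb
  refine ⟨(∑ u, R u) * s, ?_⟩
  rintro _ ⟨Ph, hPh, rfl⟩
  rw [sum_mul]
  exact sum_le_sum fun u _ =>
    mul_le_mul_of_nonneg_left (hs ⟨_, hPh.mem_Icc u, rfl⟩) (hR u)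

lemma le_maxGain (hgb : BddAbove (g '' Icc 0 1)) (hR : ∀ u, 0 ≤ R u) {Ph : U → ℝ}
    (hPh : IsPMF Ph) : ∑ u, R u * g (Ph u) ≤ maxGain g R :=
  le_csSup (bddAbove_gains hgb hR) ⟨Ph, hPh, rfl⟩

lemma maxGain_le [Nonempty U] {B : ℝ} (h : ∀ Ph : U → ℝ, IsPMF Ph → ∑ u, R u * g (Ph u) ≤ B) :
    maxGain g R ≤ B := by
  classical
  refine csSup_le ⟨_, _, isPMF_single (Classical.arbitrary U), rfl⟩ ?_
  rintro _ ⟨Ph, hPh, rfl⟩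
  exact h Ph hPh

lemma maxGain_nonneg [Nonempty U] (hgnn : ∀ t ∈ Icc (0 : ℝ) 1, 0 ≤ g t)
    (hgb : BddAbove (g '' Icc 0 1)) (hR : ∀ u, 0 ≤ R u) : 0 ≤ maxGain g R := by
  classical
  have hPh := isPMF_single (Classical.arbitrary U)
  exact (sum_nonneg fun u _ => mul_nonneg (hR u) (hgnn _ (hPh.mem_Icc u))).trans
    (le_maxGain hgb hR hPh)

lemma maxGain_le_mul [Nonempty U] (hgnn : ∀ t ∈ Icc (0 : ℝ) 1, 0 ≤ g t)
    (hgb : BddAbove (g '' Icc 0 1)) (hS : ∀ u, 0 ≤ S u) {c : ℝ} (hc : 0 ≤ c)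
    (h : ∀ u, R u ≤ c * S u) : maxGain g R ≤ c * maxGain g S := by
  refine maxGain_le fun Ph hPh => ?_
  calc ∑ u, R u * g (Ph u) ≤ ∑ u, c * (S u * g (Ph u)) := by
        refine sum_le_sum fun u _ => ?_
        rw [← mul_assoc]
        exact mul_le_mul_of_nonneg_right (h u) (hgnn _ (hPh.mem_Icc u))
    _ ≤ c * maxGain g S := by
        rw [← mul_sum]
        exact mul_le_mul_of_nonneg_left (le_maxGain hgb hS hPh) hc

lemma maxGain_div_le [Nonempty U] (hgnn : ∀ t ∈ Icc (0 : ℝ) 1, 0 ≤ g t)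
    (hgb : BddAbove (g '' Icc 0 1)) (hS : ∀ u, 0 ≤ S u) {c : ℝ} (hc : 0 ≤ c)
    (h : ∀ u, R u ≤ c * S u) : maxGain g R / maxGain g S ≤ c := by
  rcases (maxGain_nonneg hgnn hgb hS).eq_or_lt with h0 | h0
  · rwa [← h0, div_zero]
  · exact (div_le_iff₀ h0).2 (maxGain_le_mul hgnn hgb hS hc h)

lemma mul_sSup_le_maxGain (hgnn : ∀ t ∈ Icc (0 : ℝ) 1, 0 ≤ g t)
    (hgb : BddAbove (g '' Icc 0 1)) (hR : ∀ u, 0 ≤ R u) {u₀ u₁ : U} (hu : u₀ ≠ u₁) :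
    R u₀ * sSup (g '' Icc 0 1) ≤ maxGain g R := by
  classical
  have : Nonempty U := ⟨u₀⟩
  rcases (hR u₀).eq_or_lt with h0 | h0
  · rw [← h0, zero_mul]
    exact maxGain_nonneg hgnn hgb hR
  rw [mul_comm, ← le_div_iff₀ h0]
  refine csSup_le ((Set.nonempty_Icc.2 zero_le_one).image g) ?_
  rintro _ ⟨t, ht, rfl⟩
  have hPh := isPMF_pair u₀ u₁ ht
  rw [le_div_iff₀ h0, mul_comm]
  calc R u₀ * g t = R u₀ * g ((Pi.single u₀ t + Pi.single u₁ (1 - t) : U → ℝ) u₀) := by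
        simp [hu]
    _ ≤ ∑ u, R u * g ((Pi.single u₀ t + Pi.single u₁ (1 - t) : U → ℝ) u) :=
        single_le_sum (fun u _ => mul_nonneg (hR u) (hgnn _ (hPh.mem_Icc u))) (mem_univ u₀)
    _ ≤ maxGain g R := le_maxGain hgb hR hPh

end maxGain

lemma exists_le_add_mul_of_continuousWithinAt {g : ℝ → ℝ} (hg0 : g 0 = 0)
    (hgc : ContinuousWithinAt g (Icc 0 1) 0) (hgb : BddAbove (g '' Icc 0 1)) {ε : ℝ}
    (hε : 0 < ε) : ∃ L, 0 ≤ L ∧ ∀ t ∈ Icc (0 : ℝ) 1, g t ≤ ε + L * t := by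
  obtain ⟨s, hs⟩ := hgb
  have hs0 : 0 ≤ s := hg0 ▸ hs ⟨0, left_mem_Icc.2 zero_le_one, rfl⟩
  obtain ⟨δ, hδ, hsmall⟩ := Metric.continuousWithinAt_iff.1 hgc ε hε
  refine ⟨s / δ, div_nonneg hs0 hδ.le, fun t ht => ?_⟩
  rcases lt_or_ge t δ with htδ | htδ
  · have hgt := hsmall ht (by rwa [Real.dist_eq, sub_zero, abs_of_nonneg ht.1])
    rw [Real.dist_eq, hg0, sub_zero] at hgt
    have : 0 ≤ s / δ * t := mul_nonneg (div_nonneg hs0 hδ.le) ht.1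
    linarith [le_abs_self (g t)]
  · have : s ≤ s / δ * t := by
      rw [div_mul_eq_mul_div, le_div_iff₀ hδ]
      exact mul_le_mul_of_nonneg_left htδ hs0
    linarith [hs ⟨t, ht, rfl⟩]

section detectChannel

variable {X : Type*} [DecidableEq X]

noncomputable def detectChannel (x₀ : X) (M : ℕ) : X → Option (Fin M) → ℝ :=
  fun x u => if x = x₀ then u.elim 1 fun _ => 0 else u.elim 0 fun _ => (M : ℝ)⁻¹

noncomputable def twoBlock (M : ℕ) (w : ℝ) : Option (Fin M) → ℝ :=
  fun u => u.elim w fun _ => (1 - w) / M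

lemma isChannel_detectChannel (x₀ : X) {M : ℕ} (hM : 0 < M) :
    IsChannel (detectChannel x₀ M) := by
  intro x
  refine ⟨fun u => ?_, ?_⟩
  · by_cases hx : x = x₀ <;> cases u <;> simp [detectChannel, hx]
  · by_cases hx : x = x₀ <;> simp [detectChannel, hx, Fintype.sum_option, hM.ne']

lemma push_detectChannel [Fintype X] {W : X → ℝ} (hW : ∑ x, W x = 1) (x₀ : X) (M : ℕ) :
    push W (detectChannel x₀ M) = twoBlock M (W x₀) := by
  ext u
  cases u <;>
    simp [push, detectChannel, twoBlock, mul_ite, sum_ite, filter_ne', ← sum_mul, hW, div_eq_mul_inv]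

lemma twoBlock_nonneg {M : ℕ} {w : ℝ} (hw : w ∈ Icc (0 : ℝ) 1) (u : Option (Fin M)) :
    0 ≤ twoBlock M w u := by
  cases u
  · exact hw.1
  · exact div_nonneg (sub_nonneg.2 hw.2) M.cast_nonneg

end detectChannel

section twoBlock

variable {g : ℝ → ℝ} {M : ℕ} {w : ℝ}

lemma mul_sSup_le_maxGain_twoBlock (hgnn : ∀ t ∈ Icc (0 : ℝ) 1, 0 ≤ g t)
    (hgb : BddAbove (g '' Icc 0 1)) (hM : 0 < M) (hw : w ∈ Icc (0 : ℝ) 1) :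
    w * sSup (g '' Icc 0 1) ≤ maxGain g (twoBlock M w) :=
  mul_sSup_le_maxGain hgnn hgb (twoBlock_nonneg hw) (u₁ := some ⟨0, hM⟩)
    (Option.some_ne_none _).symm

lemma maxGain_twoBlock_le (hgb : BddAbove (g '' Icc 0 1)) (hM : 0 < M)
    (hw : w ∈ Icc (0 : ℝ) 1) {ε L : ℝ} (hε : 0 ≤ ε) (hL : 0 ≤ L)
    (hmaj : ∀ t ∈ Icc (0 : ℝ) 1, g t ≤ ε + L * t) :
    maxGain g (twoBlock M w) ≤ w * sSup (g '' Icc 0 1) + (ε + L / M) := by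
  have hM' : (0 : ℝ) < M := Nat.cast_pos.2 hM
  refine maxGain_le fun Ph hPh => ?_
  have hrest : ∑ i, Ph (some i) ≤ 1 := by
    have := hPh.2
    rw [Fintype.sum_option] at this
    linarith [hPh.1 none]
  have hnone : w * g (Ph none) ≤ w * sSup (g '' Icc 0 1) :=
    mul_le_mul_of_nonneg_left (le_csSup hgb ⟨_, hPh.mem_Icc none, rfl⟩) hw.1
  have hsome : ∑ i, g (Ph (some i)) ≤ M * ε + L :=
    calc ∑ i, g (Ph (some i)) ≤ ∑ i, (ε + L * Ph (some i)) :=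
          sum_le_sum fun i _ => hmaj _ (hPh.mem_Icc _)
      _ = M * ε + L * ∑ i, Ph (some i) := by simp [sum_add_distrib, mul_sum]
      _ ≤ M * ε + L := by nlinarith
  have hnoise : (1 - w) / M * ∑ i, g (Ph (some i)) ≤ ε + L / M := by
    calc (1 - w) / M * ∑ i, g (Ph (some i)) ≤ (1 - w) / M * (M * ε + L) :=
          mul_le_mul_of_nonneg_left hsome (div_nonneg (sub_nonneg.2 hw.2) hM'.le)
      _ = (1 - w) * (ε + L / M) := by field_simp
      _ ≤ ε + L / M := by nlinarith [hw.1, div_nonneg hL hM'.le]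
  simp only [Fintype.sum_option, twoBlock, Option.elim, ← mul_sum]
  linarith

end twoBlock

section achievability

variable {X : Type*} [Fintype X] [DecidableEq X] {g : ℝ → ℝ}

lemma exists_maxGain_push_detectChannel_le (hg0 : g 0 = 0)
    (hgc : ContinuousWithinAt g (Icc 0 1) 0) (hgb : BddAbove (g '' Icc 0 1)) {V : X → ℝ}
    (hV : IsPMF V) (x₀ : X) {ε : ℝ} (hε : 0 < ε) :
    ∃ M, 0 < M ∧ maxGain g (push V (detectChannel x₀ M)) ≤ V x₀ * sSup (g '' Icc 0 1) + ε := by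
  obtain ⟨L, hL, hmaj⟩ := exists_le_add_mul_of_continuousWithinAt hg0 hgc hgb (half_pos hε)
  obtain ⟨M, hM⟩ := exists_nat_gt (L / (ε / 2))
  have hM' : (0 : ℝ) < M := (div_nonneg hL (half_pos hε).le).trans_lt hM
  have hLM : L / M ≤ ε / 2 := by
    rw [div_le_iff₀ hM']
    rw [div_lt_iff₀ (half_pos hε)] at hM
    linarith
  refine ⟨M, Nat.cast_pos.1 hM', ?_⟩
  rw [push_detectChannel hV.2]
  refine (maxGain_twoBlock_le hgb (Nat.cast_pos.1 hM') (hV.mem_Icc x₀) (half_pos hε).le hL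
    hmaj).trans ?_
  linarith

lemma exists_div_le_div_maxGain_push_detectChannel (hgnn : ∀ t ∈ Icc (0 : ℝ) 1, 0 ≤ g t)
    (hg0 : g 0 = 0) (hgc : ContinuousWithinAt g (Icc 0 1) 0) (hgb : BddAbove (g '' Icc 0 1))
    (hgpos : 0 < sSup (g '' Icc 0 1)) {W V : X → ℝ} (hW : IsPMF W) (hV : IsPMF V) {x₀ : X}
    (hVx₀ : 0 < V x₀) {ε : ℝ} (hε : 0 < ε) :
    ∃ M, 0 < M ∧ W x₀ * sSup (g '' Icc 0 1) / (V x₀ * sSup (g '' Icc 0 1) + ε) ≤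
      maxGain g (push W (detectChannel x₀ M)) / maxGain g (push V (detectChannel x₀ M)) := by
  obtain ⟨M, hM, hden⟩ := exists_maxGain_push_detectChannel_le hg0 hgc hgb hV x₀ hε
  have hlow : ∀ Z : X → ℝ, IsPMF Z →
      Z x₀ * sSup (g '' Icc 0 1) ≤ maxGain g (push Z (detectChannel x₀ M)) := fun Z hZ => by
    rw [push_detectChannel hZ.2]
    exact mul_sSup_le_maxGain_twoBlock hgnn hgb hM (hZ.mem_Icc x₀)
  exact ⟨M, hM, div_le_div₀ ((mul_nonneg (hW.1 x₀) hgpos.le).trans (hlow W hW)) (hlow W hW)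
    ((mul_pos hVx₀ hgpos).trans_le (hlow V hV)) hden⟩

end achievability

section push

variable {X U : Type*} [Fintype U] {K : X → U → ℝ} {W V : X → ℝ}

lemma IsChannel.nonempty [Nonempty X] (hK : IsChannel K) : Nonempty U :=
  (hK (Classical.arbitrary X)).nonempty

lemma push_nonneg [Fintype X] (hK : IsChannel K) (hW : ∀ x, 0 ≤ W x) (u : U) : 0 ≤ push W K u :=
  sum_nonneg fun x _ => mul_nonneg (hW x) ((hK x).1 u)

lemma push_le_mul_push [Fintype X] (hK : IsChannel K) {c : ℝ} (h : ∀ x, W x ≤ c * V x) (u : U) :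
    push W K u ≤ c * push V K u := by
  rw [push, push, mul_sum]
  exact sum_le_sum fun x _ => by
    rw [← mul_assoc]
    exact mul_le_mul_of_nonneg_right (h x) ((hK x).1 u)

end push

section maxInformation

variable {X Y : Type*} [Fintype X] [Fintype Y] {P : X → Y → ℝ}

/-- `D_∞(P_{XY} ‖ P_X × P_Y)`. -/
noncomputable def maxInformation (P : X → Y → ℝ) : ℝ :=
  Dinf (fun z : X × Y => P z.1 z.2) (fun z : X × Y => (∑ y', P z.1 y') * (∑ x', P x' z.2))

lemma maxInformation_nonneg (hP : IsPMF (fun z : X × Y => P z.1 z.2)) :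
    0 ≤ maxInformation P :=
  Dinf_nonneg hP (hP.fst_marginal.prod hP.snd_marginal)

lemma exists_eq_maxInformation (hP : IsPMF (fun z : X × Y => P z.1 z.2)) :
    ∃ x y, 0 < P x y ∧
      maxInformation P = Real.log (P x y / ((∑ y', P x y') * (∑ x', P x' y))) :=
  let ⟨z, hz, hD⟩ := exists_eq_Dinf hP.exists_pos
  ⟨z.1, z.2, hz, hD⟩

lemma div_le_exp_maxInformation_mul (hP : ∀ x y, 0 ≤ P x y) (x : X) {y : Y}
    (hy : 0 < ∑ x', P x' y) :
    P x y / ∑ x', P x' y ≤ exp (maxInformation P) * ∑ y', P x y' := by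
  have hX : ∀ x, 0 ≤ ∑ y', P x y' := fun x => sum_nonneg fun y' _ => hP x y'
  rcases (hP x y).eq_or_lt with h0 | h0
  · rw [← h0, zero_div]
    exact mul_nonneg (exp_pos _).le (hX x)
  have hx : 0 < ∑ y', P x y' := h0.trans_le (single_le_sum (fun y' _ => hP x y') (mem_univ y))
  rw [div_le_iff₀ hy, mul_assoc]
  exact le_exp_Dinf_mul (a := (x, y)) (P := fun z : X × Y => P z.1 z.2)
    (Q := fun z : X × Y => (∑ y', P z.1 y') * (∑ x', P x' z.2)) h0 (mul_pos hx hy)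

end maxInformation

section gainRatios

variable {X Y U : Type*} [Fintype X] [Fintype Y] [Fintype U] {g : ℝ → ℝ} {P : X → Y → ℝ}
  {K : X → U → ℝ}

noncomputable def gainRatios (g : ℝ → ℝ) (P : X → Y → ℝ) (K : X → U → ℝ) : Set ℝ :=
  {v | ∃ y, 0 < ∑ x, P x y ∧
    v = maxGain g (push (fun x => P x y / ∑ x', P x' y) K) /
      maxGain g (push (fun x => ∑ y', P x y') K)}

lemma gainRatios_subset_Icc (hP : IsPMF (fun z : X × Y => P z.1 z.2))
    (hgnn : ∀ t ∈ Icc (0 : ℝ) 1, 0 ≤ g t) (hgb : BddAbove (g '' Icc 0 1)) (hK : IsChannel K) :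
    gainRatios g P K ⊆ Icc 0 (exp (maxInformation P)) := by
  rintro _ ⟨y, hy, rfl⟩
  have hP0 : ∀ x y, 0 ≤ P x y := fun x y => hP.1 (x, y)
  have : Nonempty X := hP.fst_marginal.nonempty
  have : Nonempty U := hK.nonempty
  have hden := push_nonneg hK hP.fst_marginal.1
  refine ⟨div_nonneg (maxGain_nonneg hgnn hgb (push_nonneg hK (isPMF_div_sum (hP0 · y) hy).1))
    (maxGain_nonneg hgnn hgb hden), ?_⟩
  exact maxGain_div_le hgnn hgb hden (exp_pos _).le
    (push_le_mul_push hK fun x => div_le_exp_maxInformation_mul hP0 x hy)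

lemma gainRatios_nonempty (hP : IsPMF (fun z : X × Y => P z.1 z.2)) :
    (gainRatios g P K).Nonempty :=
  let ⟨y, hy⟩ := hP.snd_marginal.exists_pos
  ⟨_, y, hy, rfl⟩

lemma log_sSup_gainRatios_le (hP : IsPMF (fun z : X × Y => P z.1 z.2))
    (hgnn : ∀ t ∈ Icc (0 : ℝ) 1, 0 ≤ g t) (hgb : BddAbove (g '' Icc 0 1)) (hK : IsChannel K) :
    Real.log (sSup (gainRatios g P K)) ≤ maxInformation P := by
  have hsub := gainRatios_subset_Icc hP hgnn hgb hK
  obtain ⟨v, hv⟩ := gainRatios_nonempty (g := g) (K := K) hP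
  have hle : sSup (gainRatios g P K) ≤ exp (maxInformation P) :=
    csSup_le ⟨v, hv⟩ fun w hw => (hsub hw).2
  rcases ((hsub hv).1.trans (le_csSup ⟨_, fun w hw => (hsub hw).2⟩ hv)).eq_or_lt with h0 | h0
  · rw [← h0, log_zero]
    exact maxInformation_nonneg hP
  · exact (log_le_iff_le_exp h0).2 hle

lemma le_sSup_gainRatios (hP : IsPMF (fun z : X × Y => P z.1 z.2))
    (hgnn : ∀ t ∈ Icc (0 : ℝ) 1, 0 ≤ g t) (hgb : BddAbove (g '' Icc 0 1)) (hK : IsChannel K)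
    {y : Y} (hy : 0 < ∑ x, P x y) :
    maxGain g (push (fun x => P x y / ∑ x', P x' y) K) /
      maxGain g (push (fun x => ∑ y', P x y') K) ≤ sSup (gainRatios g P K) :=
  le_csSup ⟨_, fun _ hw => (gainRatios_subset_Icc hP hgnn hgb hK hw).2⟩ ⟨y, hy, rfl⟩

end gainRatios

lemma tendsto_log_div_add {A B : ℝ} (hA : 0 < A) (hB : 0 < B) :
    Tendsto (fun ε => Real.log (A / (B + ε))) (𝓝[>] 0) (𝓝 (Real.log (A / B))) := by
  have hcont : ContinuousAt (fun ε => Real.log (A / (B + ε))) 0 :=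
    (continuousAt_const.div (continuousAt_const.add continuousAt_id) (by simpa using hB.ne')).log
      (by simpa using (div_pos hA hB).ne')
  simpa using hcont.tendsto.mono_left nhdsWithin_le_nhds

lemma maxInformation_le_of_forall_log_sSup_le {X Y : Type*} [Fintype X] [Fintype Y]
    {P : X → Y → ℝ} (hP : IsPMF (fun z : X × Y => P z.1 z.2)) {g : ℝ → ℝ}
    (hgnn : ∀ t ∈ Icc (0 : ℝ) 1, 0 ≤ g t) (hg0 : g 0 = 0)
    (hgc : ContinuousWithinAt g (Icc 0 1) 0) (hgb : BddAbove (g '' Icc 0 1))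
    (hgpos : 0 < sSup (g '' Icc 0 1)) {r : ℝ}
    (hr : ∀ M, 0 < M → ∀ K : X → Option (Fin M) → ℝ, IsChannel K →
      Real.log (sSup (gainRatios g P K)) ≤ r) :
    maxInformation P ≤ r := by
  classical
  obtain ⟨x₀, y₀, hpos, hD⟩ := exists_eq_maxInformation hP
  set s := sSup (g '' Icc (0 : ℝ) 1)
  have hP0 : ∀ x y, 0 ≤ P x y := fun x y => hP.1 (x, y)
  have hy₀ : 0 < ∑ x, P x y₀ := hpos.trans_le (single_le_sum (fun x _ => hP0 x y₀) (mem_univ x₀))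
  have hx₀ : 0 < ∑ y, P x₀ y := hpos.trans_le (single_le_sum (fun y _ => hP0 x₀ y) (mem_univ y₀))
  have hW := isPMF_div_sum (hP0 · y₀) hy₀
  have has : 0 < (P x₀ y₀ / ∑ x, P x y₀) * s := mul_pos (div_pos hpos hy₀) hgpos
  have hbs : 0 < (∑ y, P x₀ y) * s := mul_pos hx₀ hgpos
  have hlim := tendsto_log_div_add has hbs
  have hD' : Real.log ((P x₀ y₀ / ∑ x, P x y₀) * s / ((∑ y, P x₀ y) * s)) = maxInformation P := by
    rw [hD]
    congr 1
    field_simp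
  rw [hD'] at hlim
  refine le_of_tendsto hlim (eventually_nhdsWithin_of_forall fun ε hε => ?_)
  obtain ⟨M, hM, hratio⟩ := exists_div_le_div_maxGain_push_detectChannel hgnn hg0 hgc hgb hgpos
    hW hP.fst_marginal hx₀ hε
  calc Real.log ((P x₀ y₀ / ∑ x, P x y₀) * s / ((∑ y, P x₀ y) * s + ε))
      ≤ Real.log (sSup (gainRatios g P (detectChannel x₀ M))) :=
        log_le_log (div_pos has (add_pos hbs hε)) (hratio.trans (le_sSup_gainRatios hP hgnn hgb
          (isChannel_detectChannel x₀ hM) hy₀))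
    _ ≤ r := hr M hM _ (isChannel_detectChannel x₀ hM)

theorem stmt8_general {X Y : Type} [Fintype X] [Fintype Y]
    (P : X → Y → ℝ) (hP : IsPMF (fun z : X × Y => P z.1 z.2))
    (g : ℝ → ℝ)
    (hgnn : ∀ t ∈ Set.Icc (0:ℝ) 1, 0 ≤ g t)
    (hg0 : g 0 = 0)
    (hgc : ContinuousWithinAt g (Set.Icc (0:ℝ) 1) 0)
    (hgb : BddAbove (g '' Set.Icc (0:ℝ) 1))
    (hgpos : 0 < sSup (g '' Set.Icc (0:ℝ) 1)) :
    IsLUB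
      {r : ℝ | ∃ (U : Type) (iU : Fintype U) (K : X → U → ℝ),
        @IsChannel X U iU K ∧
        r = Real.log (sSup {v : ℝ | ∃ y, (0 < ∑ x, P x y) ∧
          v = @maxGain U iU g (push (fun x => P x y / ∑ x', P x' y) K) /
              @maxGain U iU g (push (fun x => ∑ y', P x y') K)})}
      (Dinf (fun z : X × Y => P z.1 z.2)
        (fun z : X × Y => (∑ y', P z.1 y') * (∑ x', P x' z.2))) := by
  refine ⟨?_, fun r hr => ?_⟩
  · rintro _ ⟨U, iU, K, hK, rfl⟩
    exact log_sSup_gainRatios_le hP hgnn hgb hK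
  · exact maxInformation_le_of_forall_log_sSup_le hP hgnn hg0 hgc hgb hgpos
      fun M _ K hK => hr ⟨_, inferInstance, K, hK, rfl⟩

/-- Under mild regularity assumptions on the gain function `g`, the maximal
realizable `g`-leakage equals `D_∞(P_{XY} ‖ P_X × P_Y)`:
`sup_{U,P_{U|X}} log max_{y : P_Y(y)>0} G_g(P_{U|Y=y})/G_g(P_U)
  = max_{(x,y) : P_{XY}(x,y)>0} log (P_{XY}(x,y)/(P_X(x)P_Y(y)))`. -/
theorem stmt8 {X Y : Type} [Fintype X] [Fintype Y]
    (P : X → Y → ℝ) (hP : IsPMF (fun z : X × Y => P z.1 z.2))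
    (hPX : ∀ x, 0 < ∑ y, P x y)
    (g : ℝ → ℝ)
    (hgnn : ∀ t ∈ Set.Icc (0:ℝ) 1, 0 ≤ g t)
    (hg0 : g 0 = 0)
    (hgc : ContinuousWithinAt g (Set.Icc (0:ℝ) 1) 0)
    (hgb : BddAbove (g '' Set.Icc (0:ℝ) 1))
    (hgpos : 0 < sSup (g '' Set.Icc (0:ℝ) 1)) :
    IsLUB
      {r : ℝ | ∃ (U : Type) (iU : Fintype U) (K : X → U → ℝ),
        @IsChannel X U iU K ∧
        r = Real.log (sSup {v : ℝ | ∃ y, (0 < ∑ x, P x y) ∧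
          v = @maxGain U iU g (push (fun x => P x y / ∑ x', P x' y) K) /
              @maxGain U iU g (push (fun x => ∑ y', P x y') K)})}
      (Dinf (fun z : X × Y => P z.1 z.2)
        (fun z : X × Y => (∑ y', P z.1 y') * (∑ x', P x' z.2))) :=
  stmt8_general P hP g hgnn hg0 hgc hgb hgpos
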